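/- arXiv:2307.08203 — 2 statements merged into one kernel-verified Lean document; each statement's English description precedes it below -/
import Mathlib

section
/- Let D = (D₁, …, D_J)ᵀ be a J-dimensional standard normal random vector N(0_J, I_J) and let a ≥ 0 (so that P(DᵀD ≥ a) > 0). Then for every t ≥ 0, P(|D₁| ≤ t | DᵀD ≥ a) ≤ P(|D₁| ≤ t); that is, a standard normal random variable is more peaked than the truncated normal ℒ′ ~ D₁ | {DᵀD ≥ a}. -/
open MeasureTheory ProbabilityTheory
open scoped ProbabilityTheory

/-- The standard Gaussian measure on `ℝ^J`: the product of `J` standard normals. -/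
noncomputable def stdGaussian (J : ℕ) : Measure (Fin J → ℝ) :=
  Measure.pi (fun _ => gaussianReal 0 1)

open Set
open scoped ENNReal

/-!
Split `D = (D₁, D')`. Given `D'`, the event `DᵀD ≥ a` is `{D₁² ≥ c}` with `c = a - D'ᵀD'`, an upper
set in `|D₁|`, while `{|D₁| ≤ t}` is a lower set in `|D₁|`. Two such events are either disjoint or
cover the line, and in both cases they are negatively correlated under any probability measure.
Integrating over `D'` (Fubini) gives `P(DᵀD ≥ a, |D₁| ≤ t) ≤ P(DᵀD ≥ a) P(|D₁| ≤ t)`.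
-/

instance stdGaussian.isProbabilityMeasure (J : ℕ) : IsProbabilityMeasure (stdGaussian J) := by
  -- `ProbabilityTheory.stdGaussian` is also in scope.
  unfold _root_.stdGaussian; infer_instance

lemma cond_apply_le_of_measure_inter_le_mul {Ω : Type*} [MeasurableSpace Ω] {μ : Measure Ω}
    [IsFiniteMeasure μ] {s t : Set Ω} {r : ℝ≥0∞} (hs : MeasurableSet s)
    (h : μ (s ∩ t) ≤ μ s * r) : μ[t | s] ≤ r := by
  rw [cond_apply hs]
  rcases eq_or_ne (μ s) 0 with h0 | h0
  · simp [measure_mono_null inter_subset_left h0]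
  · exact (ENNReal.inv_mul_le_iff h0 (measure_ne_top μ s)).2 h

lemma measure_inter_le_mul_of_disjoint_or_union_eq_univ {Ω : Type*} [MeasurableSpace Ω]
    {μ : Measure Ω} [IsProbabilityMeasure μ] {A B : Set Ω} (hA : MeasurableSet A)
    (h : Disjoint A B ∨ A ∪ B = univ) : μ (A ∩ B) ≤ μ A * μ B := by
  rcases h with h | h
  · simp [h.inter_eq]
  have hsub : Aᶜ ⊆ B := compl_subset_iff_union.2 h
  calc μ (A ∩ B) = μ B - μ Aᶜ := by
        rw [← measure_sdiff hsub hA.compl.nullMeasurableSet (measure_ne_top μ _), sdiff_compl,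
          inter_comm]
    _ ≤ μ B - μ Aᶜ * μ B := tsub_le_tsub_left (mul_le_of_le_one_right' prob_le_one) _
    _ = (1 - μ Aᶜ) * μ B := by rw [ENNReal.sub_mul fun _ _ => measure_ne_top μ _, one_mul]
    _ = μ A * μ B := by rw [← prob_compl_eq_one_sub hA.compl, compl_compl]

lemma disjoint_or_union_eq_univ_sq_ge_abs_le (c t : ℝ) :
    Disjoint {x : ℝ | c ≤ x ^ 2} {x | |x| ≤ t} ∨ {x : ℝ | c ≤ x ^ 2} ∪ {x | |x| ≤ t} = univ := by
  refine or_iff_not_imp_left.2 fun h => ?_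
  obtain ⟨x₀, hc, ht⟩ := not_disjoint_iff.1 h
  refine eq_univ_of_forall fun x => or_iff_not_imp_right.2 fun hx => ?_
  exact le_trans hc (sq_lt_sq.2 (ht.trans_lt (not_le.1 (by simpa using hx)))).le

lemma measure_sq_ge_inter_abs_le_le_mul (μ : Measure ℝ) [IsProbabilityMeasure μ] (c t : ℝ) :
    μ ({x | c ≤ x ^ 2} ∩ {x | |x| ≤ t}) ≤ μ {x | c ≤ x ^ 2} * μ {x | |x| ≤ t} :=
  measure_inter_le_mul_of_disjoint_or_union_eq_univ
    (measurableSet_le measurable_const (by fun_prop)) (disjoint_or_union_eq_univ_sq_ge_abs_le c t)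

lemma MeasureTheory.Measure.prod_inter_fst_preimage_le_mul {α β : Type*} [MeasurableSpace α]
    [MeasurableSpace β] (ν : Measure α) [SFinite ν] (π : Measure β) [SFinite π]
    {S : Set (α × β)} {T : Set α} (hS : MeasurableSet S) (hT : MeasurableSet T)
    (h : ∀ y, ν ((fun x => (x, y)) ⁻¹' S ∩ T) ≤ ν ((fun x => (x, y)) ⁻¹' S) * ν T) :
    ν.prod π (S ∩ Prod.fst ⁻¹' T) ≤ ν.prod π S * ν T := by
  rw [Measure.prod_apply_symm (hS.inter (measurable_fst hT)), Measure.prod_apply_symm hS,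
    ← lintegral_mul_const _ (measurable_measure_prodMk_right hS)]
  exact lintegral_mono h

lemma measurePreserving_stdGaussian_succ (n : ℕ) :
    MeasurePreserving (MeasurableEquiv.piFinSuccAbove (fun _ : Fin (n + 1) => ℝ) 0)
      (stdGaussian (n + 1)) ((gaussianReal 0 1).prod (stdGaussian n)) :=
  measurePreserving_piFinSuccAbove (fun _ => gaussianReal 0 1) 0

theorem stdNormal_morePeaked_than_truncatedNormal_ge_general
    (J : ℕ) (hJ : 0 < J) (a : ℝ) (t : ℝ) :
    (stdGaussian J)[|{x | a ≤ ∑ i, (x i) ^ 2}] {x | |x ⟨0, hJ⟩| ≤ t}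
      ≤ gaussianReal 0 1 {y : ℝ | |y| ≤ t} := by
  obtain ⟨n, rfl⟩ := Nat.exists_eq_add_one_of_ne_zero hJ.ne'
  set e := MeasurableEquiv.piFinSuccAbove (fun _ : Fin (n + 1) => ℝ) 0
  set S : Set (ℝ × (Fin n → ℝ)) := {p | a - ∑ j, p.2 j ^ 2 ≤ p.1 ^ 2}
  have hSmeas : MeasurableSet S := measurableSet_le (by fun_prop) (by fun_prop)
  have hTmeas : MeasurableSet {y : ℝ | |y| ≤ t} := measurableSet_le (by fun_prop) measurable_const
  have hS : {x : Fin (n + 1) → ℝ | a ≤ ∑ i, x i ^ 2} = e ⁻¹' S := by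
    ext x
    simp [e, S, Fin.sum_univ_succ, Fin.tail]
  have hT : {x : Fin (n + 1) → ℝ | |x ⟨0, hJ⟩| ≤ t} = e ⁻¹' (Prod.fst ⁻¹' {y | |y| ≤ t}) := rfl
  have hmp := measurePreserving_stdGaussian_succ n
  refine cond_apply_le_of_measure_inter_le_mul (measurableSet_le measurable_const (by fun_prop)) ?_
  rw [hS, hT, ← preimage_inter, hmp.measure_preimage_equiv, hmp.measure_preimage_equiv]
  exact Measure.prod_inter_fst_preimage_le_mul _ _ hSmeas hTmeas fun y =>
    measure_sq_ge_inter_abs_le_le_mul _ (a - ∑ j, y j ^ 2) t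

/-- For a `J`-dimensional standard normal vector `D` and `a ≥ 0`, a standard normal is more
peaked than the truncated normal `ℒ′ ~ D₁ | {DᵀD ≥ a}`: for every `t ≥ 0`,
`P(|D₁| ≤ t | DᵀD ≥ a) ≤ P(|D₁| ≤ t)`. -/
theorem stdNormal_morePeaked_than_truncatedNormal_ge
    (J : ℕ) (hJ : 0 < J) (a : ℝ) (ha : 0 ≤ a) (t : ℝ) (ht : 0 ≤ t) :
    (stdGaussian J)[|{x | a ≤ ∑ i, (x i) ^ 2}] {x | |x ⟨0, hJ⟩| ≤ t}
      ≤ gaussianReal 0 1 {y : ℝ | |y| ≤ t} :=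
  stdNormal_morePeaked_than_truncatedNormal_ge_general J hJ a t
end

section
/- Let ε ~ N(0,1) be independent of the J-dimensional standard normal vector D = (D₁, …, D_J)ᵀ ~ N(0_J, I_J), let a > 0, and let κ, ρ ∈ [0,1]. Then for every t ≥ 0, P( κ^{1/2} |ρ^{1/2} ε + (1 − ρ)^{1/2} D₁| ≤ t | DᵀD < a ) ≥ P( |ε| ≤ t ); that is, κ^{1/2}{ρ^{1/2} ε + (1 − ρ)^{1/2} ℒ}, with ℒ ~ D₁ | {DᵀD < a} independent of ε, is more peaked than a standard normal random variable. -/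
open MeasureTheory ProbabilityTheory
open scoped ProbabilityTheory

instance (J : ℕ) : IsProbabilityMeasure (stdGaussian J) := by
  unfold _root_.stdGaussian; infer_instance

/-- The joint law of `(ε, D)` with `ε ~ N(0,1)` independent of the standard normal vector
`D ~ N(0_J, I_J)`. -/
noncomputable def epsD (J : ℕ) : Measure (ℝ × (Fin J → ℝ)) :=
  (gaussianReal 0 1).prod (stdGaussian J)

/-!
Integrating out `ε` first, the joint probability becomes `∫_{DᵀD < a} G(D₁)` with
`G(x) = P(|ρ^{1/2} ε + (1 − ρ)^{1/2} x| ≤ t)`, the Gaussian mass of an interval of fixed length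
centred at a multiple of `x`; hence `G` is even and decreasing in `|x|`, and `∫ G dγ = P(|ε| ≤ t)`
because `ρ^{1/2} ε + (1 − ρ)^{1/2} ε'` is again standard normal. For fixed `D₂, …, D_J` the event
`DᵀD < a` is a symmetric interval in `D₁`, and a function decreasing in `|x|` has a larger average
over such an interval than over the whole line. The factor `κ^{1/2} ≤ 1` only enlarges the event.
-/

open Set Real
open scoped ENNReal NNReal

section SymmetricDecreasing

variable {φ : ℝ → ℝ}

lemma integral_centered_le_of_le (hφ : ∀ x y, |x| ≤ |y| → φ y ≤ φ x)
    (hφi : LocallyIntegrable φ) {t c₁ c₂ : ℝ} (ht : 0 ≤ t) (hc₁ : 0 ≤ c₁) (hc : c₁ ≤ c₂) :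
    ∫ x in c₂ - t..c₂ + t, φ x ≤ ∫ x in c₁ - t..c₁ + t, φ x := by
  have hii : ∀ a b, IntervalIntegrable φ volume a b := fun a b =>
    (hφi.integrableOn_isCompact isCompact_uIcc).intervalIntegrable
  -- sliding the window right by `c₂ - c₁` gains `[c₁ + t, c₂ + t]` and loses `[c₁ - t, c₂ - t]`,
  -- whose points are closer to the origin
  have hshift : ∫ x in c₁ + t..c₂ + t, φ x ≤ ∫ x in c₁ - t..c₂ - t, φ x := by
    rw [show c₁ + t = c₁ - t + 2 * t by ring, show c₂ + t = c₂ - t + 2 * t by ring,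
      ← intervalIntegral.integral_comp_add_right]
    refine intervalIntegral.integral_mono_on (by linarith) ?_ (hii _ _) fun x hx => ?_
    · convert (hii (c₁ + t) (c₂ + t)).comp_add_right (2 * t) using 1 <;> ring
    · exact hφ _ _ <| (abs_le.mpr ⟨by linarith [hx.1], by linarith⟩).trans (le_abs_self _)
  have h := intervalIntegral.integral_interval_sub_interval_comm (hii (c₁ - t) (c₁ + t))
    (hii (c₂ - t) (c₂ + t)) (hii (c₁ - t) (c₂ - t))
  linarith

lemma integral_centered_neg (heven : ∀ x, φ (-x) = φ x) (c t : ℝ) :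
    ∫ x in -c - t..-c + t, φ x = ∫ x in c - t..c + t, φ x := by
  calc ∫ x in -c - t..-c + t, φ x = ∫ x in -c - t..-c + t, φ (-x) := by simp_rw [heven]
    _ = ∫ x in c - t..c + t, φ x := by
      rw [intervalIntegral.integral_comp_neg]; congr 1 <;> ring

lemma integral_centered_le_of_abs_le (hφ : ∀ x y, |x| ≤ |y| → φ y ≤ φ x)
    (hφi : LocallyIntegrable φ) {t c₁ c₂ : ℝ} (ht : 0 ≤ t) (hc : |c₁| ≤ |c₂|) :
    ∫ x in c₂ - t..c₂ + t, φ x ≤ ∫ x in c₁ - t..c₁ + t, φ x := by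
  have heven : ∀ x, φ (-x) = φ x := fun x =>
    le_antisymm (hφ _ _ (abs_neg x).ge) (hφ _ _ (abs_neg x).le)
  have habs : ∀ c, ∫ x in c - t..c + t, φ x = ∫ x in |c| - t..|c| + t, φ x := fun c => by
    rcases abs_choice c with h | h <;> rw [h]
    rw [integral_centered_neg heven]
  rw [habs c₁, habs c₂]
  exact integral_centered_le_of_le hφ hφi ht (abs_nonneg _) hc

end SymmetricDecreasing

lemma gaussianPDFReal_le_of_abs_le (v : ℝ≥0) {x y : ℝ} (h : |x| ≤ |y|) :
    gaussianPDFReal 0 v y ≤ gaussianPDFReal 0 v x := by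
  simp only [gaussianPDFReal, sub_zero]
  refine mul_le_mul_of_nonneg_left (exp_le_exp.2 ?_) (by positivity)
  exact div_le_div_of_nonneg_right (neg_le_neg (sq_le_sq.mpr h)) (by positivity)

lemma gaussianReal_Icc_le_of_abs_le (v : ℝ≥0) {m₁ m₂ : ℝ} (t : ℝ) (hm : |m₁| ≤ |m₂|) :
    gaussianReal m₂ v (Icc (-t) t) ≤ gaussianReal m₁ v (Icc (-t) t) := by
  rcases lt_or_ge t 0 with ht | ht
  · simp [Icc_eq_empty (show ¬-t ≤ t by linarith)]
  rcases eq_or_ne v 0 with rfl | hv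
  · simp only [gaussianReal_zero_var]
    by_cases hm₂ : m₂ ∈ Icc (-t) t
    · have hm₁ : m₁ ∈ Icc (-t) t := by rw [mem_Icc, ← abs_le] at *; exact hm.trans hm₂
      rw [Measure.dirac_apply_of_mem hm₁]
      exact prob_le_one
    · rw [Measure.dirac_apply' _ measurableSet_Icc, indicator_of_notMem hm₂]
      exact zero_le
  have hwindow : ∀ m, gaussianReal m v (Icc (-t) t)
      = ENNReal.ofReal (∫ x in -m - t..-m + t, gaussianPDFReal 0 v x) := fun m => by
    rw [gaussianReal_apply_eq_integral _ hv, integral_Icc_eq_integral_Ioc,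
      ← intervalIntegral.integral_of_le (by linarith)]
    have hshift : ∀ x, gaussianPDFReal m v x = gaussianPDFReal 0 v (x - m) := fun x => by
      rw [gaussianPDFReal_sub, zero_add]
    simp_rw [hshift, intervalIntegral.integral_comp_sub_right]
    congr 2 <;> ring
  rw [hwindow, hwindow]
  exact ENNReal.ofReal_le_ofReal <| integral_centered_le_of_abs_le
    (fun x y => gaussianPDFReal_le_of_abs_le v) (integrable_gaussianPDFReal 0 v).locallyIntegrable
    ht (by simpa using hm)

lemma gaussianReal_map_const_mul_add_const (μ : ℝ) (v : ℝ≥0) (c m : ℝ) :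
    (gaussianReal μ v).map (fun x => c * x + m)
      = gaussianReal (c * μ + m) (.mk (c ^ 2) (sq_nonneg _) * v) := by
  rw [← gaussianReal_map_add_const, ← gaussianReal_map_const_mul,
    Measure.map_map (by fun_prop) (by fun_prop)]
  rfl

lemma gaussianReal_prod_map_linear_combination (m₁ m₂ : ℝ) (v₁ v₂ : ℝ≥0) (c₁ c₂ : ℝ) :
    ((gaussianReal m₁ v₁).prod (gaussianReal m₂ v₂)).map (fun p => c₁ * p.1 + c₂ * p.2)
      = gaussianReal (c₁ * m₁ + c₂ * m₂)
          (.mk (c₁ ^ 2) (sq_nonneg _) * v₁ + .mk (c₂ ^ 2) (sq_nonneg _) * v₂) := by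
  rw [← gaussianReal_conv_gaussianReal, ← gaussianReal_map_const_mul, ← gaussianReal_map_const_mul,
    Measure.conv, Measure.map_prod_map _ _ (by fun_prop) (by fun_prop),
    Measure.map_map (by fun_prop) (by fun_prop)]
  rfl

lemma isOpenPosMeasure_gaussianReal (μ : ℝ) {v : ℝ≥0} (hv : v ≠ 0) :
    (gaussianReal μ v).IsOpenPosMeasure := by
  refine ⟨fun U hU hne => ?_⟩
  rw [Ne, gaussianReal_of_var_ne_zero _ hv,
    withDensity_apply_eq_zero' (measurable_gaussianPDF _ _).aemeasurable]
  simpa [gaussianPDF, gaussianPDFReal_pos _ _ _ hv] using hU.measure_ne_zero volume hne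

lemma gaussianReal_abs_add_le_of_abs_le (v : ℝ≥0) (c₁ c₂ t : ℝ) {x y : ℝ} (h : |x| ≤ |y|) :
    gaussianReal 0 v {e | |c₁ * e + c₂ * y| ≤ t}
      ≤ gaussianReal 0 v {e | |c₁ * e + c₂ * x| ≤ t} := by
  have hIcc : ∀ m, gaussianReal 0 v {e | |c₁ * e + m| ≤ t}
      = gaussianReal m (.mk (c₁ ^ 2) (sq_nonneg _) * v) (Icc (-t) t) := fun m => by
    rw [← zero_add m, ← mul_zero c₁, ← gaussianReal_map_const_mul_add_const,
      Measure.map_apply (by fun_prop) measurableSet_Icc]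
    simp only [mul_zero, zero_add, preimage, mem_Icc, abs_le]
  rw [hIcc, hIcc]
  exact gaussianReal_Icc_le_of_abs_le _ t (by rw [abs_mul, abs_mul]; gcongr)

lemma lintegral_gaussianReal_sqrt_combination {ρ : ℝ} (hρ0 : 0 ≤ ρ) (hρ1 : ρ ≤ 1) {s : Set ℝ}
    (hs : MeasurableSet s) :
    ∫⁻ x, gaussianReal 0 1 {e | √ρ * e + √(1 - ρ) * x ∈ s} ∂gaussianReal 0 1
      = gaussianReal 0 1 s := by
  have hf : Measurable fun p : ℝ × ℝ => √ρ * p.1 + √(1 - ρ) * p.2 := by fun_prop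
  refine (Measure.prod_apply_symm (hf hs)).symm.trans ?_
  rw [← Measure.map_apply hf hs, gaussianReal_prod_map_linear_combination]
  congr
  · ring
  · ext; simp [sq_sqrt hρ0, sq_sqrt (sub_nonneg.2 hρ1)]

lemma measure_mul_lintegral_le_setLIntegral {α : Type*} [MeasurableSpace α] {μ : Measure α}
    [IsProbabilityMeasure μ] {E : Set α} (hE : MeasurableSet E) {f : α → ℝ≥0∞}
    (hf : ∀ x ∈ E, ∀ y ∉ E, f y ≤ f x) :
    μ E * ∫⁻ x, f x ∂μ ≤ ∫⁻ x in E, f x ∂μ := by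
  -- a threshold `s` separates the values of `f` on `E` from those on `Eᶜ`
  set s := ⨅ x ∈ E, f x
  have hin : s * μ E ≤ ∫⁻ x in E, f x ∂μ := by
    rw [← setLIntegral_const]
    exact setLIntegral_mono_ae' hE (ae_of_all _ fun x hx => biInf_le f hx)
  have hout : ∫⁻ x in Eᶜ, f x ∂μ ≤ s * μ Eᶜ := by
    rw [← setLIntegral_const]
    exact setLIntegral_mono measurable_const fun y hy => le_iInf₂ fun x hx => hf x hx y hy
  have hsplit : μ E + μ Eᶜ = 1 := by rw [measure_add_measure_compl hE, measure_univ]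
  calc μ E * ∫⁻ x, f x ∂μ
      = μ E * ∫⁻ x in E, f x ∂μ + μ E * ∫⁻ x in Eᶜ, f x ∂μ := by
        rw [← mul_add, lintegral_add_compl _ hE]
    _ ≤ μ E * ∫⁻ x in E, f x ∂μ + μ E * (s * μ Eᶜ) := by gcongr
    _ = μ E * ∫⁻ x in E, f x ∂μ + μ Eᶜ * (s * μ E) := by ring
    _ ≤ μ E * ∫⁻ x in E, f x ∂μ + μ Eᶜ * ∫⁻ x in E, f x ∂μ := by gcongr
    _ = ∫⁻ x in E, f x ∂μ := by rw [← add_mul, hsplit, one_mul]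

lemma prod_mul_lintegral_le_setLIntegral {α β : Type*} [MeasurableSpace α] [MeasurableSpace β]
    {μ : Measure α} [IsProbabilityMeasure μ] {ν : Measure β} [SFinite ν] {f : α → ℝ≥0∞}
    (hf : Measurable f) {B : Set (α × β)} (hB : MeasurableSet B)
    (hsep : ∀ r x y, (x, r) ∈ B → (y, r) ∉ B → f y ≤ f x) :
    (μ.prod ν) B * ∫⁻ x, f x ∂μ ≤ ∫⁻ p in B, f p.1 ∂(μ.prod ν) := by
  rw [Measure.prod_apply_symm hB, ← lintegral_mul_const _ (measurable_measure_prodMk_right hB),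
    ← lintegral_indicator hB,
    lintegral_prod_symm (B.indicator fun p => f p.1)
      ((hf.comp measurable_fst).indicator hB).aemeasurable]
  refine lintegral_mono fun r => ?_
  have hslice : MeasurableSet ((fun x => (x, r)) ⁻¹' B) := measurable_prodMk_right hB
  refine (measure_mul_lintegral_le_setLIntegral hslice fun x hx y hy =>
    hsep r x y hx hy).trans_eq ?_
  rw [← lintegral_indicator hslice]
  rfl

lemma pi_mul_lintegral_le_setLIntegral_ball {μ : Measure ℝ} [IsProbabilityMeasure μ] (n : ℕ)
    {f : ℝ → ℝ≥0∞} (hf : Measurable f) (hf_anti : ∀ x y, |x| ≤ |y| → f y ≤ f x) (a : ℝ) :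
    Measure.pi (fun _ : Fin (n + 1) => μ) {d : Fin (n + 1) → ℝ | ∑ i, d i ^ 2 < a} * ∫⁻ x, f x ∂μ
      ≤ ∫⁻ d in {d : Fin (n + 1) → ℝ | ∑ i, d i ^ 2 < a}, f (d 0) ∂(Measure.pi fun _ => μ) := by
  have hmp := measurePreserving_piFinSuccAbove (fun _ : Fin (n + 1) => μ) 0
  set B : Set (ℝ × (Fin n → ℝ)) := {q | q.1 ^ 2 + ∑ j, q.2 j ^ 2 < a}
  have hB : MeasurableSet B := measurableSet_lt (by fun_prop) measurable_const
  have hpre : {d : Fin (n + 1) → ℝ | ∑ i, d i ^ 2 < a}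
      = MeasurableEquiv.piFinSuccAbove _ 0 ⁻¹' B := by
    ext d; simp [B, Fin.sum_univ_succ, Fin.tail]
  rw [hpre, hmp.measure_preimage hB.nullMeasurableSet]
  refine (prod_mul_lintegral_le_setLIntegral hf hB fun r x y hx hy => hf_anti _ _ ?_).trans_eq
    (hmp.setLIntegral_comp_preimage hB (hf.comp measurable_fst)).symm
  simp only [B, mem_ofPred_eq, not_lt] at hx hy
  exact sq_le_sq.mp (by linarith)

lemma prod_apply_snd_preimage_inter {α β : Type*} [MeasurableSpace α] [MeasurableSpace β]
    (μ : Measure α) (ν : Measure β) [SFinite μ] [SFinite ν] (B : Set β)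
    {W : Set (α × β)} (hW : MeasurableSet W) :
    (μ.prod ν) (Prod.snd ⁻¹' B ∩ W) = ∫⁻ y in B, μ ((fun x => (x, y)) ⁻¹' W) ∂ν := by
  have hrestrict : μ.prod (ν.restrict B) = (μ.prod ν).restrict (univ ×ˢ B) := by
    rw [← Measure.prod_restrict, Measure.restrict_univ]
  rw [← Measure.prod_apply_symm hW, hrestrict, Measure.restrict_apply hW, univ_prod, inter_comm]

theorem scaled_convolution_truncated_lt_morePeaked_than_stdNormal_general
    (J : ℕ) (hJ : 0 < J) (a : ℝ) (ha : 0 < a)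
    (κ ρ : ℝ) (hκ1 : κ ≤ 1) (hρ0 : 0 ≤ ρ) (hρ1 : ρ ≤ 1)
    (t : ℝ) :
    gaussianReal 0 1 {y : ℝ | |y| ≤ t}
      ≤ (epsD J)[|{p | ∑ i, (p.2 i) ^ 2 < a}]
          {p | Real.sqrt κ * |Real.sqrt ρ * p.1 + Real.sqrt (1 - ρ) * p.2 ⟨0, hJ⟩| ≤ t} := by
  obtain ⟨n, rfl⟩ : ∃ n, J = n + 1 := ⟨J - 1, by omega⟩
  set γ := gaussianReal 0 1
  set ν := stdGaussian (n + 1)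
  set B : Set (Fin (n + 1) → ℝ) := {d | ∑ i, d i ^ 2 < a}
  set W : Set (ℝ × ℝ) := {p | |√ρ * p.1 + √(1 - ρ) * p.2| ≤ t}
  set G : ℝ → ℝ≥0∞ := fun x => γ ((fun e => (e, x)) ⁻¹' W)
  have hB : MeasurableSet B := measurableSet_lt (by fun_prop) measurable_const
  have hW : MeasurableSet W := measurableSet_le (by fun_prop) measurable_const
  have hνB : ν B ≠ 0 := by
    have := isOpenPosMeasure_gaussianReal 0 one_ne_zero
    exact (isOpen_lt (by fun_prop) continuous_const).measure_ne_zero (Measure.pi fun _ => γ)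
      ⟨0, by simpa [B] using ha⟩
  have hG : ν B * γ {y | |y| ≤ t} ≤ ∫⁻ d in B, G (d 0) ∂ν := by
    rw [← lintegral_gaussianReal_sqrt_combination hρ0 hρ1
      (measurableSet_le (by fun_prop) measurable_const)]
    exact pi_mul_lintegral_le_setLIntegral_ball n (measurable_measure_prodMk_right hW)
      (fun x y => gaussianReal_abs_add_le_of_abs_le 1 _ _ t) a
  have hslice : ∫⁻ d in B, G (d 0) ∂ν
      = epsD (n + 1) (Prod.snd ⁻¹' B ∩ {p | |√ρ * p.1 + √(1 - ρ) * p.2 ⟨0, hJ⟩| ≤ t}) := by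
    rw [epsD, prod_apply_snd_preimage_inter _ _ B (measurableSet_le (by fun_prop) measurable_const)]
    rfl
  have hmono : {p : ℝ × (Fin (n + 1) → ℝ) | |√ρ * p.1 + √(1 - ρ) * p.2 ⟨0, hJ⟩| ≤ t}
      ⊆ {p | √κ * |√ρ * p.1 + √(1 - ρ) * p.2 ⟨0, hJ⟩| ≤ t} := fun p hp =>
    (mul_le_of_le_one_left (abs_nonneg _) (sqrt_le_one.2 hκ1)).trans hp
  change γ _ ≤ (epsD (n + 1))[|Prod.snd ⁻¹' B] _
  rw [cond_apply (measurable_snd hB), ← Measure.snd_apply hB, epsD, Measure.snd_prod,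
    ← ENNReal.mul_le_iff_le_inv hνB (measure_ne_top _ _)]
  exact (hG.trans_eq hslice).trans (measure_mono (inter_subset_inter_right _ hmono))

/-- For `κ, ρ ∈ [0,1]` and `a > 0`, the random variable
`κ^{1/2}{ρ^{1/2} ε + (1 − ρ)^{1/2} ℒ}`, with `ℒ ~ D₁ | {DᵀD < a}` independent of `ε ~ N(0,1)`,
is more peaked than a standard normal: for `t ≥ 0`,
`P(κ^{1/2}|ρ^{1/2} ε + (1 − ρ)^{1/2} D₁| ≤ t | DᵀD < a) ≥ P(|ε| ≤ t)`. -/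
theorem scaled_convolution_truncated_lt_morePeaked_than_stdNormal
    (J : ℕ) (hJ : 0 < J) (a : ℝ) (ha : 0 < a)
    (κ ρ : ℝ) (hκ0 : 0 ≤ κ) (hκ1 : κ ≤ 1) (hρ0 : 0 ≤ ρ) (hρ1 : ρ ≤ 1)
    (t : ℝ) (ht : 0 ≤ t) :
    gaussianReal 0 1 {y : ℝ | |y| ≤ t}
      ≤ (epsD J)[|{p | ∑ i, (p.2 i) ^ 2 < a}]
          {p | Real.sqrt κ * |Real.sqrt ρ * p.1 + Real.sqrt (1 - ρ) * p.2 ⟨0, hJ⟩| ≤ t} :=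
  scaled_convolution_truncated_lt_morePeaked_than_stdNormal_general J hJ a ha κ ρ hκ1 hρ0 hρ1 t
end
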